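/- arXiv:1603.03351 — 3 statements merged into one kernel-verified Lean document; each statement's English description precedes it below -/
import Mathlib

section
/- Let R be a preordered ring. R is auto-archimedean if and only if for every n ∈ ℕ and every w = (w₀, w₁, ..., wₙ) ∈ R^(1+n), whenever the map Φ_w : Rⁿ → R, Φ_w(x) = w₀ + ∑ᵢ xᵢwᵢ, maps R₊ⁿ into R₊, one has wᵢ ∈ R₊ for all i = 0,...,n. -/
/-! If `r` has its ray `{s * r : s ∈ R₊}` bounded above by `b`, then the affine map
`x ↦ b - x * r` on `R` sends `R₊` into `R₊`, so the coefficient `-r` is nonnegative.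
Conversely, if `Φ_w` sends `R₊ⁿ` into `R₊`, evaluating it at `0` gives `w₀ ∈ R₊`, and evaluating it
on the ray `s • eⱼ` shows that `w₀` bounds the ray of `-wⱼ`, whence `wⱼ ∈ R₊`. -/

section

variable {R : Type*} [Ring R] (S : Subsemiring R)

def IsAutoArchimedean : Prop :=
  ∀ r : R, (∃ b : R, ∀ s ∈ S, b - s * r ∈ S) → -r ∈ S

variable {S}

def affineForm {n : ℕ} (w : Fin (n + 1) → R) (x : Fin n → R) : R :=
  w 0 + ∑ i, x i * w i.succ

@[simp]
theorem affineForm_zero {n : ℕ} (w : Fin (n + 1) → R) : affineForm w 0 = w 0 := by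
  simp [affineForm]

theorem affineForm_single {n : ℕ} (w : Fin (n + 1) → R) (j : Fin n) (s : R) :
    affineForm w (Pi.single j s) = w 0 + s * w j.succ := by
  simp [affineForm, Pi.single_apply, ite_mul]

theorem affineForm_vecCons_one (b r : R) (x : Fin 1 → R) :
    affineForm ![b, -r] x = b - x 0 * r := by
  simp [affineForm, sub_eq_add_neg]

theorem IsAutoArchimedean.mem_of_mapsTo_affineForm (h : IsAutoArchimedean S) {n : ℕ}
    {w : Fin (n + 1) → R} (hw : Set.MapsTo (affineForm w) {x | ∀ i, x i ∈ S} S) (i : Fin (n + 1)) :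
    w i ∈ S := by
  have hw₀ : w 0 ∈ S := by simpa using hw (x := 0) fun _ => S.zero_mem
  refine Fin.cases hw₀ (fun j => ?_) i
  have hray : ∀ s ∈ S, w 0 - s * -w j.succ ∈ S := fun s hs => by
    have hsingle : Pi.single j s ∈ {x : Fin n → R | ∀ i, x i ∈ S} := fun k => by
      rcases eq_or_ne k j with rfl | hk
      · simpa using hs
      · simp [hk]
    simpa [affineForm_single] using hw hsingle
  simpa using h _ ⟨w 0, hray⟩

theorem isAutoArchimedean_of_forall_mapsTo_affineForm
    (h : ∀ (n : ℕ) (w : Fin (n + 1) → R),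
      Set.MapsTo (affineForm w) {x | ∀ i, x i ∈ S} S → ∀ i, w i ∈ S) :
    IsAutoArchimedean S := by
  rintro r ⟨b, hb⟩
  refine h 1 ![b, -r] (fun x hx => ?_) 1
  simpa [affineForm_vecCons_one] using hb (x 0) (hx 0)

end

/-- a preordered ring `R` is auto-archimedean iff for every `n` and every
`w ∈ R^(1+n)`, if `Φ_w : x ↦ w₀ + ∑ i, x i * w i` maps `R₊ⁿ` into `R₊` then all `w i ∈ R₊`. -/
theorem stmt5 (R : Type*) [Ring R] (S : Subsemiring R) :
    (∀ r : R, (∃ b : R, ∀ s ∈ S, b - s * r ∈ S) → -r ∈ S) ↔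
      (∀ (n : ℕ) (w : Fin (n + 1) → R),
        (∀ x : Fin n → R, (∀ i, x i ∈ S) → w 0 + ∑ i, x i * w i.succ ∈ S) →
        ∀ i, w i ∈ S) :=
  ⟨fun h n w hw => IsAutoArchimedean.mem_of_mapsTo_affineForm h fun x hx => hw x hx,
    fun h => isAutoArchimedean_of_forall_mapsTo_affineForm fun n w hw => h n w fun x hx => hw hx⟩
end

section
/- Let d > 1 be an integer and R a preordered ring in which d is invertible with inverse in R₊, and in which 1 is an order unit for R₊ (for every x ∈ R₊ there exists n ∈ ℕ with x ≤ n). Then every left R₊-affine map φ : R₊ → R₊ satisfies φ(x) = φ(0) + x·(φ(1) − φ(0)) for all x ∈ R₊, assuming the image of ℤ[1/d] is central in R. -/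
/-!
Fix `D ∈ R₊` with an inverse `v ∈ R₊`. For `0 ≤ z ≤ D`, the point `z` is the `R₊`-affine
combination `(z v) · D + ((D - z) v) · 0`, so `φ z = φ 0 + z v (φ D - φ 0)`; taking `z = 1`
identifies `v (φ D - φ 0)` with `φ 1 - φ 0`. Since `1` is an order unit and `d > 1`, every
`x ∈ R₊` lies below some power `D = dⁿ`, whose inverse `uⁿ` is in `R₊`.
-/

section

variable {R : Type*} [Ring R]

def IsLeftAffineOn (S : Subsemiring R) (φ : R → R) : Prop :=
  ∀ (m : ℕ) (w y : Fin m → R), (∀ j, w j ∈ S) → (∑ j, w j) = 1 →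
    (∀ j, y j ∈ S) → φ (∑ j, w j * y j) = ∑ j, w j * φ (y j)

namespace IsLeftAffineOn

variable {S : Subsemiring R} {φ : R → R}

theorem map_add_mul (hφ : IsLeftAffineOn S φ) {a b y₁ y₂ : R} (ha : a ∈ S) (hb : b ∈ S)
    (hab : a + b = 1) (hy₁ : y₁ ∈ S) (hy₂ : y₂ ∈ S) :
    φ (a * y₁ + b * y₂) = a * φ y₁ + b * φ y₂ := by
  simpa using hφ 2 ![a, b] ![y₁, y₂] (by simp [Fin.forall_fin_two, ha, hb]) (by simpa using hab)
    (by simp [Fin.forall_fin_two, hy₁, hy₂])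

theorem apply_eq_add_mul_inv (hφ : IsLeftAffineOn S φ) {D v z : R} (hv : v ∈ S)
    (hDv : D * v = 1) (hvD : v * D = 1) (hz : z ∈ S) (hDz : D - z ∈ S) :
    φ z = φ 0 + z * v * (φ D - φ 0) := by
  have hD : D ∈ S := by simpa using add_mem hz hDz
  have h := hφ.map_add_mul (mul_mem hz hv) (mul_mem hDz hv)
    (by rw [← add_mul, add_sub_cancel, hDv]) hD (zero_mem S)
  rw [mul_zero, add_zero, mul_assoc, hvD, mul_one] at h
  rw [h, sub_mul, hDv]
  noncomm_ring

theorem apply_eq_add_mul_sub (hφ : IsLeftAffineOn S φ) {D v z : R} (hv : v ∈ S)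
    (hDv : D * v = 1) (hvD : v * D = 1) (hD1 : D - 1 ∈ S) (hz : z ∈ S) (hDz : D - z ∈ S) :
    φ z = φ 0 + z * (φ 1 - φ 0) := by
  have h1 := hφ.apply_eq_add_mul_inv hv hDv hvD (one_mem S) hD1
  rw [hφ.apply_eq_add_mul_inv hv hDv hvD hz hDz, h1, mul_assoc, one_mul, add_sub_cancel_left]

end IsLeftAffineOn

theorem Subsemiring.natCast_sub_mem_of_le {S : Subsemiring R} {m N : ℕ} (hmN : m ≤ N) {x : R}
    (hx : (m : R) - x ∈ S) : (N : R) - x ∈ S := by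
  have h : (N : R) - x = ((N - m : ℕ) : R) + ((m : R) - x) := by
    rw [Nat.cast_sub hmN]; abel
  exact h ▸ add_mem (natCast_mem S _) hx

end

theorem stmt10_general (R : Type*) [Ring R] (S : Subsemiring R) (d : ℕ) (hd : 1 < d)
    (u : R) (hu : u ∈ S) (hdu : (d : R) * u = 1)
    (hunit : ∀ x ∈ S, ∃ n : ℕ, (n : R) - x ∈ S)
    (φ : R → R)
    (haff : ∀ (m : ℕ) (w y : Fin m → R), (∀ j, w j ∈ S) → (∑ j, w j) = 1 →
      (∀ j, y j ∈ S) → φ (∑ j, w j * y j) = ∑ j, w j * φ (y j)) :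
    ∀ x ∈ S, φ x = φ 0 + x * (φ 1 - φ 0) := by
  intro x hx
  obtain ⟨n, hn⟩ := hunit x hx
  have hud : u * (d : R) = 1 := (Nat.cast_commute d u).eq ▸ hdu
  have hDv : ((d ^ n : ℕ) : R) * u ^ n = 1 := by
    rw [Nat.cast_pow, ← (Nat.cast_commute d u).mul_pow, hdu, one_pow]
  have hvD : u ^ n * ((d ^ n : ℕ) : R) = 1 := by
    rw [Nat.cast_pow, ← ((Nat.cast_commute d u).symm).mul_pow, hud, one_pow]
  have hD1 : ((d ^ n : ℕ) : R) - 1 ∈ S :=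
    Subsemiring.natCast_sub_mem_of_le (m := 1) (Nat.one_le_pow _ _ (by omega))
      (by simp)
  exact IsLeftAffineOn.apply_eq_add_mul_sub haff (pow_mem hu n) hDv hvD hD1 hx
    (Subsemiring.natCast_sub_mem_of_le (Nat.lt_pow_self hd).le hn)

/-- let `d > 1`, let `R` be a preordered ring in which `d` is invertible
with central inverse in `R₊`, and in which `1` is an order unit for `R₊`.  Then every
left `R₊`-affine map `φ : R₊ → R₊` satisfies `φ x = φ 0 + x * (φ 1 - φ 0)` on `R₊`. -/
theorem stmt10 (R : Type*) [Ring R] (S : Subsemiring R) (d : ℕ) (hd : 1 < d)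
    (u : R) (hu : u ∈ S) (hdu : (d : R) * u = 1) (hud : u * (d : R) = 1)
    (hcentral : ∀ a : R, a * u = u * a)
    (hunit : ∀ x ∈ S, ∃ n : ℕ, (n : R) - x ∈ S)
    (φ : R → R) (hmaps : ∀ x ∈ S, φ x ∈ S)
    (haff : ∀ (m : ℕ) (w y : Fin m → R), (∀ j, w j ∈ S) → (∑ j, w j) = 1 →
      (∀ j, y j ∈ S) → φ (∑ j, w j * y j) = ∑ j, w j * φ (y j)) :
    ∀ x ∈ S, φ x = φ 0 + x * (φ 1 - φ 0) :=
  stmt10_general R S d hd u hu hdu hunit φ haff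
end

section
/- Let d > 1 be an integer and R a preordered ring in which d is invertible with inverse in R₊, in which 1 is an order unit for R₊. Then R has the affine extension property: every left R₊-affine map φ : R₊ⁿ → R₊ satisfies φ(x) = φ(0) + ∑ᵢ xᵢ(φ(bᵢ) − φ(0)) in R for all x ∈ R₊ⁿ, where bᵢ is the i-th standard basis vector. -/
/-!
For `x ∈ R₊ⁿ` with `1 - ∑ xᵢ ∈ R₊`, the formula is one application of affinity: `x` is the
convex combination of the basis vectors `bᵢ` with weights `xᵢ` and of `0` with weight
`1 - ∑ xᵢ`. A general `x` is brought into this simplex by the scalar `t = (1/d)ᵏ` with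
`∑ xᵢ ≤ dᵏ` (order unit), and affinity along the segment from `0` to `x` gives
`φ (t x) - φ 0 = t (φ x - φ 0)`, so the formula for `t x` descends to `x` after cancelling
`t` on the left by `dᵏ`.
-/

open Finset

section

variable {R : Type*} [Ring R] {S : Subsemiring R}

def IsLeftAffine (S : Subsemiring R) {n : ℕ} (φ : (Fin n → R) → R) : Prop :=
  ∀ (m : ℕ) (w : Fin m → R) (y : Fin m → Fin n → R),
    (∀ j, w j ∈ S) → (∑ j, w j) = 1 → (∀ j i, y j i ∈ S) →
      φ (fun i => ∑ j, w j * y j i) = ∑ j, w j * φ (y j)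

lemma exists_natCast_sub_sum_mem (hunit : ∀ x ∈ S, ∃ m : ℕ, (m : R) - x ∈ S)
    {n : ℕ} {x : Fin n → R} (hx : ∀ i, x i ∈ S) : ∃ M : ℕ, (M : R) - ∑ i, x i ∈ S := by
  choose m hm using fun i => hunit (x i) (hx i)
  refine ⟨∑ i, m i, ?_⟩
  rw [Nat.cast_sum, ← sum_sub_distrib]
  exact sum_mem fun i _ => hm i

lemma one_sub_mul_mem_of_natCast_mul_eq_one {N M : ℕ} {t y : R} (ht : t ∈ S)
    (htN : (N : R) * t = 1) (hMN : M ≤ N) (hy : (M : R) - y ∈ S) : 1 - t * y ∈ S := by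
  have hNt : t * (N : R) = 1 := (Nat.cast_commute N t).eq ▸ htN
  have h : 1 - t * y = t * (((N - M : ℕ) : R) + ((M : R) - y)) := by
    rw [Nat.cast_sub hMN, mul_add, mul_sub, mul_sub, hNt]
    abel
  rw [h]
  exact S.mul_mem ht (S.add_mem (natCast_mem S _) hy)

namespace IsLeftAffine

variable {n : ℕ} {φ : (Fin n → R) → R}

lemma apply_mul_left (hφ : IsLeftAffine S φ) {t : R} (ht : t ∈ S) (ht' : 1 - t ∈ S)
    {x : Fin n → R} (hx : ∀ i, x i ∈ S) :
    φ (fun i => t * x i) = t * φ x + (1 - t) * φ 0 := by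
  have h := hφ 2 ![t, 1 - t] ![x, 0]
    (fun j => by fin_cases j <;> simpa)
    (by simp)
    (fun j i => by fin_cases j <;> simp [hx i])
  simpa [Fin.sum_univ_two] using h

lemma apply_eq_of_one_sub_sum_mem (hφ : IsLeftAffine S φ) {x : Fin n → R}
    (hx : ∀ i, x i ∈ S) (hsum : 1 - ∑ i, x i ∈ S) :
    φ x = φ 0 + ∑ i, x i * (φ (fun j => if j = i then 1 else 0) - φ 0) := by
  set b : Fin n → Fin n → R := fun i j => if j = i then 1 else 0
  have h := hφ (n + 1) (Fin.snoc x (1 - ∑ i, x i)) (Fin.snoc b 0)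
    (Fin.lastCases (by simpa using hsum) (fun i => by simpa using hx i))
    (by simp [Fin.sum_univ_castSucc])
    (Fin.lastCases (fun _ => by simp) (fun j i => by
      simp only [Fin.snoc_castSucc, b]
      split_ifs
      exacts [S.one_mem, S.zero_mem]))
  simp only [Fin.sum_univ_castSucc, Fin.snoc_castSucc, Fin.snoc_last, Pi.zero_apply,
    mul_zero, add_zero, b, mul_ite, mul_one, sum_ite_eq, mem_univ, if_true] at h
  simp only [h, mul_sub, sum_sub_distrib, sub_mul, one_mul, ← sum_mul]
  abel

lemma apply_eq_of_scaled (hφ : IsLeftAffine S φ) {t c : R} (ht : t ∈ S) (ht' : 1 - t ∈ S)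
    (hct : c * t = 1) {x : Fin n → R} (hx : ∀ i, x i ∈ S) (hsum : 1 - ∑ i, t * x i ∈ S) :
    φ x = φ 0 + ∑ i, x i * (φ (fun j => if j = i then 1 else 0) - φ 0) := by
  have hseg := hφ.apply_mul_left ht ht' hx
  have hsimplex := hφ.apply_eq_of_one_sub_sum_mem (fun i => S.mul_mem ht (hx i)) hsum
  simp only [mul_assoc, ← mul_sum] at hsimplex
  set Δ := ∑ i, x i * (φ (fun j => if j = i then 1 else 0) - φ 0)
  have hscaled : t * (φ x - φ 0) = t * Δ := by
    rw [hseg, sub_mul, one_mul] at hsimplex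
    calc t * (φ x - φ 0) = t * φ x + (φ 0 - t * φ 0) - φ 0 := by rw [mul_sub]; abel
      _ = t * Δ := by rw [hsimplex]; abel
  have := congrArg (c * ·) hscaled
  simp only [← mul_assoc, hct, one_mul] at this
  exact eq_add_of_sub_eq' this

end IsLeftAffine

end

theorem stmt11_general (R : Type*) [Ring R] (S : Subsemiring R) (d : ℕ) (hd : 1 < d)
    (u : R) (hu : u ∈ S) (hdu : (d : R) * u = 1)
    (hunit : ∀ x ∈ S, ∃ m : ℕ, (m : R) - x ∈ S)
    (n : ℕ) (φ : (Fin n → R) → R)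
    (haff : ∀ (m : ℕ) (w : Fin m → R) (y : Fin m → Fin n → R),
      (∀ j, w j ∈ S) → (∑ j, w j) = 1 → (∀ j i, y j i ∈ S) →
      φ (fun i => ∑ j, w j * y j i) = ∑ j, w j * φ (y j)) :
    ∀ x : Fin n → R, (∀ i, x i ∈ S) →
      φ x = φ 0 + ∑ i, x i * (φ (fun j => if j = i then 1 else 0) - φ 0) := by
  intro x hx
  obtain ⟨M, hM⟩ := exists_natCast_sub_sum_mem hunit hx
  obtain ⟨k, hk⟩ : ∃ k, M ≤ d ^ k := ⟨M, (Nat.lt_pow_self hd).le⟩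
  have huk : u ^ k ∈ S := pow_mem hu k
  have hdk : ((d ^ k : ℕ) : R) * u ^ k = 1 := by
    rw [Nat.cast_pow, ← (Nat.cast_commute d u).mul_pow, hdu, one_pow]
  have hone : 1 - u ^ k ∈ S := by
    simpa using one_sub_mul_mem_of_natCast_mul_eq_one (y := 1) huk hdk
      (Nat.one_le_pow _ _ (by omega)) (by simp)
  have hsum : 1 - ∑ i, u ^ k * x i ∈ S := by
    simpa [mul_sum] using one_sub_mul_mem_of_natCast_mul_eq_one huk hdk hk hM
  exact IsLeftAffine.apply_eq_of_scaled haff huk hone hdk hx hsum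

/-- let `d > 1`, let `R` be a preordered ring in which `d` is invertible
with central inverse in `R₊`, and in which `1` is an order unit for `R₊`.  Then `R` has
the affine extension property: every left `R₊`-affine map `φ : R₊ⁿ → R₊` satisfies
`φ x = φ 0 + ∑ i, x i * (φ bᵢ - φ 0)` in `R` for all `x ∈ R₊ⁿ`. -/
theorem stmt11 (R : Type*) [Ring R] (S : Subsemiring R) (d : ℕ) (hd : 1 < d)
    (u : R) (hu : u ∈ S) (hdu : (d : R) * u = 1) (hud : u * (d : R) = 1)
    (hcentral : ∀ a : R, a * u = u * a)
    (hunit : ∀ x ∈ S, ∃ m : ℕ, (m : R) - x ∈ S)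
    (n : ℕ) (φ : (Fin n → R) → R)
    (hmaps : ∀ x : Fin n → R, (∀ i, x i ∈ S) → φ x ∈ S)
    (haff : ∀ (m : ℕ) (w : Fin m → R) (y : Fin m → Fin n → R),
      (∀ j, w j ∈ S) → (∑ j, w j) = 1 → (∀ j i, y j i ∈ S) →
      φ (fun i => ∑ j, w j * y j i) = ∑ j, w j * φ (y j)) :
    ∀ x : Fin n → R, (∀ i, x i ∈ S) →
      φ x = φ 0 + ∑ i, x i * (φ (fun j => if j = i then 1 else 0) - φ 0) :=
  stmt11_general R S d hd u hu hdu hunit n φ haff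
end
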